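/- Let w ≥ 4, assume a_{w-1} = 1, and let 0 ≤ s < t be integers with 2^t ≤ w−2. Consider the (2w) × ((t−s+1)·w) block matrix over F₂ whose columns are indexed by pairs (k, j) with 0 ≤ k ≤ t−s and 1 ≤ j ≤ w, whose top block in block-column k is B^{2^{s+k}} and whose bottom block in block-column k is Q_{2^{s+k}}. This matrix has rank exactly w + 2^t − 2^s. -/

import Mathlib

open Matrix

/-- The matrix `B` of MT-type recursions: first row zero, row `i` (0-indexed,
`1 ≤ i ≤ w-2`) is the standard basis row vector with a `1` in column `i+1`,
and the last row is `(a_{w-1}, …, a_0)` (stored as `a 0, …, a (w-1)`). -/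
def mtB (w : ℕ) (a : Fin w → ZMod 2) : Matrix (Fin w) (Fin w) (ZMod 2) :=
  Matrix.of fun i j =>
    if (i : ℕ) = w - 1 then a j
    else if 1 ≤ (i : ℕ) ∧ (j : ℕ) = (i : ℕ) + 1 then 1 else 0

/-- The matrix `C`: its only nonzero entry is a `1` in position `(1,2)` (1-indexed). -/
def mtC (w : ℕ) : Matrix (Fin w) (Fin w) (ZMod 2) :=
  Matrix.of fun i j => if (i : ℕ) = 0 ∧ (j : ℕ) = 1 then 1 else 0

/-- `Q_k = Σ_{i=0}^{k-1} B^i · C · B^{k-1-i}`. -/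
def mtQ (w : ℕ) (a : Fin w → ZMod 2) (k : ℕ) : Matrix (Fin w) (Fin w) (ZMod 2) :=
  ∑ i ∈ Finset.range k, (mtB w a) ^ i * mtC w * (mtB w a) ^ (k - 1 - i)

/-!
The Krylov vectors `u_i = B^i e_0`, `i < w`, form a basis: `a_{w-1} = 1` gives `u_1 = e_{w-1}`,
and the recursion `B e_{k+1} = e_k + a_{k+1} e_{w-1}` shows `e_j ≡ u_{w-j}` modulo
`⟨u_1, …, u_{w-j-1}⟩`. Since `B` shifts the rows `1, …, w-1`, the matrix `C` picks exactly one term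
of `Q_m e_j`, namely `Q_m e_j = u_{m-j}` for `1 ≤ j ≤ m` and `Q_m e_j = 0` otherwise.

Put `M = 2^s`, `N = 2^t`. The columns with `Q_m e_j = 0` lie in `⟨u_M, …, u_{w-1}⟩ × 0`, and the
block `M` alone spans this space, triangularly. Modulo it, the column `(m, j)` with `1 ≤ j ≤ m`
equals the column `(N, N - (m - j))`. So the column space has the basis `(u_p, 0)`, `M ≤ p < w`,
together with the columns `(B^N e_{N-r}, u_r)`, `r < N`, and its dimension is `w - M + N`.
-/

open Matrix Module

lemma LinearIndependent.sumElim_inl_prod {R M N ι κ : Type*} [Ring R] [AddCommGroup M]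
    [AddCommGroup N] [Module R M] [Module R N] [Fintype ι] [Fintype κ] {x : ι → M}
    {v : κ → M × N} (hx : LinearIndependent R x) (hv : LinearIndependent R fun k => (v k).2) :
    LinearIndependent R (Sum.elim (fun i => (x i, (0 : N))) v) := by
  rw [Fintype.linearIndependent_iff] at hx hv ⊢
  intro g hg
  rw [Fintype.sum_sum_type] at hg
  have hsnd : ∑ k, g (Sum.inr k) • (v k).2 = 0 := by
    simpa [Prod.snd_sum] using congrArg Prod.snd hg
  have hfst : ∑ i, g (Sum.inl i) • x i = 0 := by
    simpa [Prod.fst_sum, hv _ hsnd] using congrArg Prod.fst hg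
  rintro (i | k)
  exacts [hx _ hfst i, hv _ hsnd k]

-- `natBasisVec w j = 0` when `j ≥ w`.
def natBasisVec (w j : ℕ) : Fin w → ZMod 2 := fun i => if (i : ℕ) = j then 1 else 0

def mtKrylov (w : ℕ) (a : Fin w → ZMod 2) (i : ℕ) : Fin w → ZMod 2 :=
  mtB w a ^ i *ᵥ natBasisVec w 0

def mtKrylovSpan (w : ℕ) (a : Fin w → ZMod 2) (lo hi : ℕ) :
    Submodule (ZMod 2) (Fin w → ZMod 2) :=
  Submodule.span (ZMod 2) (mtKrylov w a '' Set.Ico lo hi)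

def mtCol (w : ℕ) (a : Fin w → ZMod 2) (m j : ℕ) : (Fin w → ZMod 2) × (Fin w → ZMod 2) :=
  (mtB w a ^ m *ᵥ natBasisVec w j, mtQ w a m *ᵥ natBasisVec w j)

def mtColBasis (w : ℕ) (a : Fin w → ZMod 2) (M N : ℕ) :
    Finset.Ico M w ⊕ Finset.range N → (Fin w → ZMod 2) × (Fin w → ZMod 2) :=
  Sum.elim (fun p => (mtKrylov w a p, 0)) fun r => mtCol w a N (N - r)

def mtBlockMatrix (w : ℕ) (a : Fin w → ZMod 2) {ι : Type*} (m : ι → ℕ) :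
    Matrix (Fin w ⊕ Fin w) (ι × Fin w) (ZMod 2) :=
  Matrix.of fun r c => Sum.elim (fun i => (mtB w a ^ m c.1) i c.2)
    (fun i => mtQ w a (m c.1) i c.2) r

section
variable {w : ℕ} {a : Fin w → ZMod 2}

lemma natBasisVec_eq_single {j : ℕ} (hj : j < w) : natBasisVec w j = Pi.single ⟨j, hj⟩ 1 := by
  ext i
  simp [natBasisVec, Pi.single_apply, Fin.ext_iff]

lemma mulVec_natBasisVec (X : Matrix (Fin w) (Fin w) (ZMod 2)) {j : ℕ} (hj : j < w) :
    X *ᵥ natBasisVec w j = X.col ⟨j, hj⟩ := by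
  rw [natBasisVec_eq_single hj, mulVec_single_one]

lemma mtB_mulVec_apply (x : Fin w → ZMod 2) {i k : Fin w} (hi : 1 ≤ (i : ℕ))
    (hk : (i : ℕ) + 1 = k) : (mtB w a *ᵥ x) i = x k := by
  have hiw : (i : ℕ) ≠ w - 1 := by omega
  rw [mulVec, dotProduct, Finset.sum_eq_single k]
  · simp [mtB, hiw, hi, hk]
  · intro l _ hl
    simp only [mtB, of_apply, hiw, if_false]
    rw [if_neg (fun h => hl (Fin.ext (h.2.trans hk))), zero_mul]
  · simp

lemma mtB_pow_mulVec_apply (n : ℕ) (x : Fin w → ZMod 2) {i k : Fin w} (hi : 1 ≤ (i : ℕ))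
    (hk : (i : ℕ) + n = k) : (mtB w a ^ n *ᵥ x) i = x k := by
  induction n generalizing x k with
  | zero => rw [pow_zero, one_mulVec, Fin.ext (by omega : (i : ℕ) = k)]
  | succ n ih =>
    rw [pow_succ, ← mulVec_mulVec, ih _ (k := ⟨i + n, by omega⟩) rfl,
      mtB_mulVec_apply x (by simp; omega) (by simp; omega)]

lemma mtB_mulVec_natBasisVec_zero (hw : 0 < w) (ha : a ⟨0, hw⟩ = 1) :
    mtB w a *ᵥ natBasisVec w 0 = natBasisVec w (w - 1) := by
  ext i
  by_cases hi : (i : ℕ) = w - 1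
  · simp [mulVec_natBasisVec _ hw, mtB, natBasisVec, hi, ha]
  · simp [mulVec_natBasisVec _ hw, mtB, natBasisVec, hi]

lemma mtB_mulVec_natBasisVec_succ {k : ℕ} (hk : 1 ≤ k) (hkw : k + 1 < w) :
    mtB w a *ᵥ natBasisVec w (k + 1) =
      natBasisVec w k + a ⟨k + 1, hkw⟩ • natBasisVec w (w - 1) := by
  ext i
  by_cases hi : (i : ℕ) = w - 1
  · simp [mulVec_natBasisVec _ hkw, mtB, natBasisVec, hi]
    omega
  · by_cases hik : (i : ℕ) = k
    · simp [mulVec_natBasisVec _ hkw, mtB, natBasisVec, hik, hk, show k ≠ w - 1 by omega]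
    · simp [mulVec_natBasisVec _ hkw, mtB, natBasisVec, hi, hik]
      omega

lemma mtC_mulVec (hw : 1 < w) (x : Fin w → ZMod 2) :
    mtC w *ᵥ x = x ⟨1, hw⟩ • natBasisVec w 0 := by
  ext i
  rw [mulVec, dotProduct, Finset.sum_eq_single ⟨1, hw⟩]
  · by_cases hi : (i : ℕ) = 0 <;> simp [mtC, natBasisVec, hi, mul_comm]
  · intro l _ hl
    simp only [mtC, of_apply]
    rw [if_neg (fun h => hl (Fin.ext h.2)), zero_mul]
  · simp

lemma mtKrylov_zero : mtKrylov w a 0 = natBasisVec w 0 := by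
  rw [mtKrylov, pow_zero, one_mulVec]

lemma mtKrylov_one (hw : 0 < w) (ha : a ⟨0, hw⟩ = 1) :
    mtKrylov w a 1 = natBasisVec w (w - 1) := by
  rw [mtKrylov, pow_one, mtB_mulVec_natBasisVec_zero hw ha]

lemma pow_mulVec_mtKrylov (n i : ℕ) : mtB w a ^ n *ᵥ mtKrylov w a i = mtKrylov w a (n + i) := by
  rw [mtKrylov, mtKrylov, mulVec_mulVec, pow_add]

lemma mtKrylov_mem_mtKrylovSpan {lo hi i : ℕ} (hlo : lo ≤ i) (hhi : i < hi) :
    mtKrylov w a i ∈ mtKrylovSpan w a lo hi :=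
  Submodule.subset_span ⟨i, ⟨hlo, hhi⟩, rfl⟩

lemma mtKrylovSpan_mono {lo hi lo' hi' : ℕ} (hlo : lo' ≤ lo) (hhi : hi ≤ hi') :
    mtKrylovSpan w a lo hi ≤ mtKrylovSpan w a lo' hi' :=
  Submodule.span_mono (Set.image_mono (Set.Ico_subset_Ico hlo hhi))

lemma pow_mulVec_mem_mtKrylovSpan (n : ℕ) {lo hi : ℕ} {x : Fin w → ZMod 2}
    (hx : x ∈ mtKrylovSpan w a lo hi) :
    mtB w a ^ n *ᵥ x ∈ mtKrylovSpan w a (lo + n) (hi + n) := by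
  have hmap : (mtKrylovSpan w a lo hi).map (mtB w a ^ n).mulVecLin ≤
      mtKrylovSpan w a (lo + n) (hi + n) := by
    rw [mtKrylovSpan, Submodule.map_span, Submodule.span_le]
    rintro _ ⟨_, ⟨i, ⟨hlo, hhi⟩, rfl⟩, rfl⟩
    rw [mulVecLin_apply, pow_mulVec_mtKrylov]
    exact mtKrylov_mem_mtKrylovSpan (by omega) (by omega)
  exact hmap (Submodule.mem_map_of_mem hx)

-- Telescope `B e_{k+1} = e_k + a_{k+1} u_1` along `e_{j+d}, …, e_j`.
lemma pow_mulVec_natBasisVec_sub_mem (hw : 0 < w) (ha : a ⟨0, hw⟩ = 1) {j : ℕ} (hj : 1 ≤ j)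
    (d : ℕ) (hjd : j + d < w) :
    mtB w a ^ d *ᵥ natBasisVec w (j + d) - natBasisVec w j ∈ mtKrylovSpan w a 1 (d + 1) := by
  induction d with
  | zero => simp
  | succ d ih =>
    have hstep : mtB w a ^ (d + 1) *ᵥ natBasisVec w (j + (d + 1)) =
        mtB w a ^ d *ᵥ natBasisVec w (j + d) + a ⟨j + d + 1, hjd⟩ • mtKrylov w a (d + 1) := by
      rw [pow_succ, ← mulVec_mulVec, ← add_assoc,
        mtB_mulVec_natBasisVec_succ (by omega) (by omega), mulVec_add, mulVec_smul,
        ← mtKrylov_one hw ha, pow_mulVec_mtKrylov]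
    rw [hstep, add_sub_right_comm]
    exact Submodule.add_mem _ (mtKrylovSpan_mono le_rfl (by omega) (ih (by omega)))
      (Submodule.smul_mem _ _ (mtKrylov_mem_mtKrylovSpan (by omega) (by omega)))

lemma natBasisVec_sub_mtKrylov_mem (hw : 0 < w) (ha : a ⟨0, hw⟩ = 1) {j : ℕ} (hj : 1 ≤ j)
    (hjw : j < w) : natBasisVec w j - mtKrylov w a (w - j) ∈ mtKrylovSpan w a 1 (w - j) := by
  have h := pow_mulVec_natBasisVec_sub_mem hw ha hj (w - 1 - j) (by omega)
  rwa [show j + (w - 1 - j) = w - 1 by omega, ← mtKrylov_one hw ha, pow_mulVec_mtKrylov,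
    show w - 1 - j + 1 = w - j by omega, sub_mem_comm_iff] at h

lemma mtKrylovSpan_eq_top (hw : 0 < w) (ha : a ⟨0, hw⟩ = 1) : mtKrylovSpan w a 0 w = ⊤ := by
  refine eq_top_iff.2 ((Pi.basisFun (ZMod 2) (Fin w)).span_eq.ge.trans (Submodule.span_le.2 ?_))
  rintro _ ⟨j, rfl⟩
  rw [Pi.basisFun_apply, ← natBasisVec_eq_single j.isLt, SetLike.mem_coe]
  rcases Nat.eq_zero_or_pos (j : ℕ) with hj | hj
  · rw [hj, ← mtKrylov_zero]
    exact mtKrylov_mem_mtKrylovSpan le_rfl hw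
  · rw [← sub_add_cancel (natBasisVec w j) (mtKrylov w a (w - j))]
    exact Submodule.add_mem _
      (mtKrylovSpan_mono (Nat.zero_le 1) (by omega) (natBasisVec_sub_mtKrylov_mem hw ha hj j.isLt))
      (mtKrylov_mem_mtKrylovSpan (Nat.zero_le _) (by omega))

lemma linearIndepOn_mtKrylov (hw : 0 < w) (ha : a ⟨0, hw⟩ = 1) :
    LinearIndepOn (ZMod 2) (mtKrylov w a) (Set.Iio w) := by
  rw [← Fin.range_val, linearIndepOn_range_iff Fin.val_injective]
  refine linearIndependent_of_top_le_span_of_card_eq_finrank ?_ (by simp)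
  rw [← mtKrylovSpan_eq_top hw ha, mtKrylovSpan, Set.range_comp, Fin.range_val, ← Set.Ico_bot]
  rfl

lemma pow_mulVec_natBasisVec_sub_mtKrylov_mem (hw : 0 < w) (ha : a ⟨0, hw⟩ = 1) {m j : ℕ}
    (hmj : m < j) (hjw : j < w) :
    mtB w a ^ m *ᵥ natBasisVec w j - mtKrylov w a (m + (w - j)) ∈
      mtKrylovSpan w a (m + 1) (m + (w - j)) := by
  have h := pow_mulVec_mem_mtKrylovSpan m (natBasisVec_sub_mtKrylov_mem hw ha (by omega) hjw)
  rwa [mulVec_sub, pow_mulVec_mtKrylov, add_comm 1, add_comm (w - j)] at h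

lemma pow_mulVec_natBasisVec_sub_pow_mulVec_mem (hw : 0 < w) (ha : a ⟨0, hw⟩ = 1)
    {j m n : ℕ} (hj : 1 ≤ j) (hjm : j ≤ m) (hmn : m ≤ n) (hnw : n < w) :
    mtB w a ^ n *ᵥ natBasisVec w (n - (m - j)) - mtB w a ^ m *ᵥ natBasisVec w j ∈
      mtKrylovSpan w a (m + 1) (n + 1) := by
  have h := pow_mulVec_mem_mtKrylovSpan m
    (pow_mulVec_natBasisVec_sub_mem hw ha hj (n - m) (by omega))
  rwa [mulVec_sub, mulVec_mulVec, ← pow_add, show m + (n - m) = n by omega,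
    show j + (n - m) = n - (m - j) by omega, add_comm 1,
    show n - m + 1 + m = n + 1 by omega] at h

-- `C` keeps only row `1` of `B^{m-1-i} e_j`, which is entry `m - i` of `e_j`.
lemma mtQ_mulVec_natBasisVec {m : ℕ} (hm : m < w) (j : ℕ) :
    mtQ w a m *ᵥ natBasisVec w j = if 1 ≤ j ∧ j ≤ m then mtKrylov w a (m - j) else 0 := by
  have hterm : ∀ i ∈ Finset.range m, (mtB w a ^ i * mtC w * mtB w a ^ (m - 1 - i)) *ᵥ
      natBasisVec w j = (if j = m - i then 1 else 0) • mtKrylov w a i := by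
    intro i hi
    have hi := Finset.mem_range.1 hi
    rw [← mulVec_mulVec, ← mulVec_mulVec, mtC_mulVec (by omega), mulVec_smul,
      mtB_pow_mulVec_apply _ _ (k := ⟨m - i, by omega⟩) le_rfl (by simp; omega)]
    simp [natBasisVec, mtKrylov, eq_comm]
  rw [mtQ, sum_mulVec, Finset.sum_congr rfl hterm]
  split_ifs with hjm
  · rw [Finset.sum_eq_single (m - j)]
    · rw [if_pos (by omega), one_smul]
    · intro i hi hij
      rw [if_neg (by have := Finset.mem_range.1 hi; omega), zero_smul]
    · intro h
      exact absurd (Finset.mem_range.2 (by omega)) h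
  · refine Finset.sum_eq_zero fun i hi => ?_
    rw [if_neg (by have := Finset.mem_range.1 hi; omega), zero_smul]

lemma linearIndependent_mtColBasis (hw : 0 < w) (ha : a ⟨0, hw⟩ = 1) {M N : ℕ} (hNw : N < w) :
    LinearIndependent (ZMod 2) (mtColBasis w a M N) := by
  have hu := linearIndepOn_mtKrylov hw ha
  refine LinearIndependent.sumElim_inl_prod (hu.mono fun p hp => (Finset.mem_Ico.1 hp).2) ?_
  have hsnd : (fun r : Finset.range N => (mtCol w a N (N - r)).2) =
      fun r : Finset.range N => mtKrylov w a r := by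
    ext1 r
    have hr := Finset.mem_range.1 r.2
    rw [mtCol, mtQ_mulVec_natBasisVec hNw, if_pos (by omega), Nat.sub_sub_self hr.le]
  rw [hsnd]
  exact hu.mono fun r hr => (Finset.mem_range.1 hr).trans hNw

lemma mtCol_mem_span_mtColBasis (hw : 0 < w) (ha : a ⟨0, hw⟩ = 1) {M N m j : ℕ}
    (hMm : M ≤ m) (hmN : m ≤ N) (hNw : N < w) (hjw : j < w) :
    mtCol w a m j ∈ Submodule.span (ZMod 2) (Set.range (mtColBasis w a M N)) := by
  set S := Submodule.span (ZMod 2) (Set.range (mtColBasis w a M N))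
  have htop : ∀ x ∈ mtKrylovSpan w a M w, (x, 0) ∈ S := by
    have hmap : (mtKrylovSpan w a M w).map (LinearMap.inl (ZMod 2) _ (Fin w → ZMod 2)) ≤ S := by
      rw [mtKrylovSpan, Submodule.map_span, Submodule.span_le]
      rintro _ ⟨_, ⟨p, hp, rfl⟩, rfl⟩
      exact Submodule.subset_span ⟨Sum.inl ⟨p, Finset.mem_Ico.2 hp⟩, rfl⟩
    exact fun x hx => hmap (Submodule.mem_map_of_mem hx)
  rw [mtCol, mtQ_mulVec_natBasisVec (hmN.trans_lt hNw)]
  split_ifs with hj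
  · have hr : m - j < N := by omega
    have hcolN : mtColBasis w a M N (Sum.inr ⟨m - j, Finset.mem_range.2 hr⟩) =
        (mtB w a ^ N *ᵥ natBasisVec w (N - (m - j)), mtKrylov w a (m - j)) := by
      simp only [mtColBasis, Sum.elim_inr, mtCol, mtQ_mulVec_natBasisVec hNw,
        if_pos (show 1 ≤ N - (m - j) ∧ N - (m - j) ≤ N by omega), Nat.sub_sub_self hr.le]
    have hdiff := pow_mulVec_natBasisVec_sub_pow_mulVec_mem hw ha hj.1 hj.2 hmN hNw
    rw [← sub_sub_cancel (mtB w a ^ N *ᵥ natBasisVec w (N - (m - j))) (mtB w a ^ m *ᵥ _),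
      ← sub_zero (mtKrylov w a (m - j)), ← Prod.mk_sub_mk, ← hcolN]
    exact S.sub_mem (Submodule.subset_span ⟨_, rfl⟩)
      (htop _ (mtKrylovSpan_mono (by omega) (by omega) hdiff))
  · refine htop _ ?_
    rcases Nat.eq_zero_or_pos j with rfl | hj0
    · exact mtKrylov_mem_mtKrylovSpan hMm (by omega)
    · have hdiff := pow_mulVec_natBasisVec_sub_mtKrylov_mem hw ha (m := m) (by omega) hjw
      rw [← sub_add_cancel (mtB w a ^ m *ᵥ natBasisVec w j) (mtKrylov w a (m + (w - j)))]
      exact Submodule.add_mem _ (mtKrylovSpan_mono (by omega) (by omega) hdiff)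
        (mtKrylov_mem_mtKrylovSpan (by omega) (by omega))

lemma span_mtColBasis_le (hw : 0 < w) (ha : a ⟨0, hw⟩ = 1) {M N : ℕ} (hMN : M ≤ N)
    (hNw : N < w) {V : Submodule (ZMod 2) ((Fin w → ZMod 2) × (Fin w → ZMod 2))}
    (hM : ∀ j < w, mtCol w a M j ∈ V) (hN : ∀ j < w, mtCol w a N j ∈ V) :
    Submodule.span (ZMod 2) (Set.range (mtColBasis w a M N)) ≤ V := by
  have hMw : M < w := hMN.trans_lt hNw
  -- `u_p` is the column `M + (w - p)` of block `M`, up to `u_{M+1}, …, u_{p-1}`.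
  have htop : ∀ p, M ≤ p → p < w → (mtKrylov w a p, 0) ∈ V := by
    intro p
    induction p using Nat.strong_induction_on with
    | _ p ih =>
      intro hMp hpw
      rcases hMp.eq_or_lt with rfl | hMp
      · simpa [mtCol, mtQ_mulVec_natBasisVec hMw, mtKrylov] using hM 0 hw
      · have hlower : mtKrylovSpan w a (M + 1) p ≤ V.comap (LinearMap.inl (ZMod 2) _ _) := by
          rw [mtKrylovSpan, Submodule.span_le]
          rintro _ ⟨i, ⟨hi, hip⟩, rfl⟩
          exact ih i hip (by omega) (by omega)
        set j := M + (w - p)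
        have hdiff := pow_mulVec_natBasisVec_sub_mtKrylov_mem hw ha (m := M) (j := j)
          (by omega) (by omega)
        rw [show M + (w - j) = p by omega] at hdiff
        have hcol : mtCol w a M j = (mtB w a ^ M *ᵥ natBasisVec w j, 0) := by
          rw [mtCol, mtQ_mulVec_natBasisVec hMw, if_neg (by omega)]
        rw [← sub_sub_cancel (mtB w a ^ M *ᵥ natBasisVec w j) (mtKrylov w a p),
          ← sub_zero (0 : Fin w → ZMod 2), ← Prod.mk_sub_mk, ← hcol]
        exact V.sub_mem (hM _ (by omega)) (hlower hdiff)
  rw [Submodule.span_le]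
  rintro _ ⟨p | r, rfl⟩
  · exact htop p (Finset.mem_Ico.1 p.2).1 (Finset.mem_Ico.1 p.2).2
  · exact hN _ (by omega)

lemma rank_mtBlockMatrix_eq_finrank_span {ι : Type*} [Fintype ι] (m : ι → ℕ) :
    (mtBlockMatrix w a m).rank = finrank (ZMod 2)
      (Submodule.span (ZMod 2) (Set.range fun c : ι × Fin w => mtCol w a (m c.1) c.2)) := by
  let e := LinearEquiv.sumArrowLequivProdArrow (Fin w) (Fin w) (ZMod 2) (ZMod 2)
  have hcol : e ∘ (mtBlockMatrix w a m).col = fun c => mtCol w a (m c.1) c.2 := by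
    ext c i <;> simp [e, mtBlockMatrix, mtCol, mulVec_natBasisVec _ c.2.isLt]
  rw [rank_eq_finrank_span_cols, ← e.finrank_map_eq, Submodule.map_span, ← Set.range_comp,
    LinearEquiv.coe_coe, hcol]

theorem rank_mtBlockMatrix (hw : 0 < w) (ha : a ⟨0, hw⟩ = 1) {ι : Type*} [Fintype ι]
    (m : ι → ℕ) {M N : ℕ} (hm : ∀ i, M ≤ m i ∧ m i ≤ N) (hM : ∃ i, m i = M)
    (hN : ∃ i, m i = N) (hNw : N < w) : (mtBlockMatrix w a m).rank = w - M + N := by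
  obtain ⟨iM, hiM⟩ := hM
  obtain ⟨iN, hiN⟩ := hN
  have hspan : Submodule.span (ZMod 2) (Set.range fun c : ι × Fin w => mtCol w a (m c.1) c.2) =
      Submodule.span (ZMod 2) (Set.range (mtColBasis w a M N)) := by
    refine le_antisymm (Submodule.span_le.2 ?_)
      (span_mtColBasis_le hw ha (hiM ▸ (hm iM).2) hNw ?_ ?_)
    · rintro _ ⟨c, rfl⟩
      exact mtCol_mem_span_mtColBasis hw ha (hm c.1).1 (hm c.1).2 hNw c.2.isLt
    · exact fun j hj => Submodule.subset_span ⟨(iM, ⟨j, hj⟩), by simp [hiM]⟩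
    · exact fun j hj => Submodule.subset_span ⟨(iN, ⟨j, hj⟩), by simp [hiN]⟩
  rw [rank_mtBlockMatrix_eq_finrank_span, hspan,
    finrank_span_eq_card (linearIndependent_mtColBasis hw ha hNw)]
  simp

end

theorem stmt12 (w : ℕ) (hw : 4 ≤ w) (a : Fin w → ZMod 2) (ha : a ⟨0, by omega⟩ = 1)
    (s t : ℕ) (hst : s < t) (ht : 2 ^ t ≤ w - 2) :
    (Matrix.of fun (r : Fin w ⊕ Fin w) (c : Fin (t - s + 1) × Fin w) =>
      Sum.elim (fun i => ((mtB w a) ^ (2 ^ (s + (c.1 : ℕ)))) i c.2)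
               (fun i => (mtQ w a (2 ^ (s + (c.1 : ℕ)))) i c.2) r).rank
    = w + (2 ^ t - 2 ^ s) := by
  have hpow : 2 ^ s ≤ 2 ^ t := Nat.pow_le_pow_right two_pos hst.le
  have hrank := rank_mtBlockMatrix (by omega) ha (fun k : Fin (t - s + 1) => 2 ^ (s + (k : ℕ)))
    (M := 2 ^ s) (N := 2 ^ t)
    (fun k => ⟨Nat.pow_le_pow_right two_pos (by omega), Nat.pow_le_pow_right two_pos (by omega)⟩)
    ⟨0, by simp⟩ ⟨Fin.last _, by simp [hst.le]⟩ (by omega)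
  rw [mtBlockMatrix] at hrank
  omega
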